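/- arXiv:1711.01058 — 12 statements merged into one kernel-verified Lean document; each statement's English description precedes it below -/
import Mathlib

section
/- If R is a finite commutative local principal ideal ring with unity whose maximal ideal M satisfies M^n = 0 and M^{n-1} ≠ 0 for some n, then the complement of the zero-divisor graph of R is a divisor graph, i.e., there exists an injective labeling f of the nonzero zero-divisors of R by positive integers such that for distinct nonzero zero-divisors a, b, one has a·b ≠ 0 if and only if f(a) divides f(b) or f(b) divides f(a). -/
/-!
Write the maximal ideal as `(p)`, with `p` nilpotent. Every nonzero `a` is associated to a power
`p ^ v a`, so `a * b ≠ 0` iff `v a + v b` is less than the nilpotency class of `p`: the complement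
of `Γ(R)` is a threshold graph, and threshold graphs are divisor graphs.
-/
/-- A finite simple graph is a *divisor graph* if there is an injection from its
vertices to the positive integers such that distinct vertices are adjacent iff
one label divides the other. -/
def IsDivisorGraph {V : Type*} (G : SimpleGraph V) : Prop :=
  ∃ f : V → ℕ, Function.Injective f ∧ (∀ v, 0 < f v) ∧
    ∀ u v : V, u ≠ v → (G.Adj u v ↔ f u ∣ f v ∨ f v ∣ f u)

/-- The vertex set of the zero-divisor graph: nonzero zero-divisors of `R`. -/
abbrev ZDVertex (R : Type*) [CommRing R] : Type _ :=
  {a : R // a ≠ 0 ∧ ∃ b : R, b ≠ 0 ∧ a * b = 0}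

/-- The zero-divisor graph `Γ(R)`. -/
def zeroDivisorGraph (R : Type*) [CommRing R] : SimpleGraph (ZDVertex R) where
  Adj x y := x ≠ y ∧ x.val * y.val = 0
  symm := ⟨fun x y ⟨h1, h2⟩ => ⟨h1.symm, by rwa [mul_comm]⟩⟩
  loopless := ⟨fun x ⟨h, _⟩ => h rfl⟩

/-- The complement of the zero-divisor graph `Γ(R)̄`. -/
def compZDGraph (R : Type*) [CommRing R] : SimpleGraph (ZDVertex R) where
  Adj x y := x ≠ y ∧ x.val * y.val ≠ 0
  symm := ⟨fun x y ⟨h1, h2⟩ => ⟨h1.symm, by rwa [mul_comm]⟩⟩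
  loopless := ⟨fun x ⟨h, _⟩ => h rfl⟩

namespace Nat

lemma mul_add_lt_mul_iff_lt {N r x y : ℕ} (hr : r < N) : N * x + r < N * y ↔ x < y := by
  constructor
  · contrapose!
    intro hyx
    exact (mul_le_mul_left N hyx).trans (le_add_right _ _)
  · intro h
    calc N * x + r < N * (x + 1) := by rw [mul_add_one]; omega
      _ ≤ N * y := mul_le_mul_left N h

lemma nth_prime_add_one_ne_two (i : ℕ) : nth Nat.Prime (i + 1) ≠ 2 := by
  have := nth_strictMono infinite_setOfPred_prime i.succ_pos
  rw [nth_prime_zero_eq_two] at this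
  exact this.ne'

variable {p q : ℕ}

lemma two_pow_dvd_two_pow_mul_iff (hq : q.Prime) (hq2 : q ≠ 2) (i j : ℕ) :
    2 ^ i ∣ 2 ^ j * q ↔ i ≤ j := by
  rw [Coprime.dvd_mul_right (Coprime.pow_left i (coprime_two_left.mpr (hq.odd_of_ne_two hq2))),
    pow_dvd_pow_iff_le_right one_lt_two]

lemma not_two_pow_mul_dvd_two_pow (hq : q.Prime) (hq2 : q ≠ 2) (i j : ℕ) :
    ¬ 2 ^ j * q ∣ 2 ^ i := fun h =>
  hq2 ((prime_dvd_prime_iff_eq hq prime_two).mp (hq.dvd_of_dvd_pow (dvd_of_mul_left_dvd h)))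

lemma eq_of_two_pow_mul_dvd_two_pow_mul (hp : p.Prime) (hp2 : p ≠ 2) (hq : q.Prime) {i j : ℕ}
    (h : 2 ^ i * p ∣ 2 ^ j * q) : p = q :=
  (prime_dvd_prime_iff_eq hp hq).mp <|
    (Coprime.dvd_mul_left (Coprime.pow_right j ((coprime_primes hp prime_two).mpr hp2))).mp
      (dvd_of_mul_left_dvd h)

end Nat

lemma pow_eq_zero_iff_nilpotencyClass_le {R : Type*} [MonoidWithZero R] {x : R}
    (hx : IsNilpotent x) {k : ℕ} : x ^ k = 0 ↔ nilpotencyClass x ≤ k :=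
  ⟨fun h => Nat.sInf_le h, fun h => pow_eq_zero_of_le h (pow_nilpotencyClass hx)⟩

lemma IsLocalRing.exists_associated_pow_of_ne_zero {R : Type*} [CommRing R] [IsLocalRing R]
    {p : R} (hM : maximalIdeal R = Ideal.span {p}) (hp : IsNilpotent p) {a : R} (ha : a ≠ 0) :
    ∃ k, Associated (p ^ k) a := by
  obtain ⟨m, hm⟩ := hp
  have hfin : FiniteMultiplicity p a :=
    ⟨m, fun h => ha (zero_dvd_iff.mp (by rwa [pow_succ, hm, zero_mul] at h))⟩
  obtain ⟨c, hc⟩ := pow_multiplicity_dvd p a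
  have hcu : IsUnit c := by
    by_contra hcu
    have hpc : p ∣ c := by
      rw [← Ideal.mem_span_singleton, ← hM, mem_maximalIdeal]
      exact hcu
    have := mul_dvd_mul_left (p ^ multiplicity p a) hpc
    rw [← pow_succ, ← hc] at this
    exact hfin.not_pow_dvd_of_multiplicity_lt (lt_add_one _) this
  exact ⟨_, hc ▸ associated_mul_unit_right _ _ hcu⟩

section ThresholdGraph

variable {V : Type*}

def thresholdGraph (w : V → ℕ) (t : ℕ) : SimpleGraph V where
  Adj a b := a ≠ b ∧ w a + w b < t
  symm := ⟨fun _ _ h => ⟨h.1.symm, by omega⟩⟩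
  loopless := ⟨fun _ h => h.1 rfl⟩

/-- The vertices with `2 * w a < t` form a clique and are labelled by powers of `2`, with exponents
`N * w a + g a + 1` that are distinct when `g` injects into `range N`; the others form an
independent set, each labelled by a power of `2` times its own odd prime. -/
noncomputable def thresholdLabel (w : V → ℕ) (t N : ℕ) (g : V → ℕ) (a : V) : ℕ :=
  if 2 * w a < t then 2 ^ (N * w a + g a + 1)
  else 2 ^ (N * (t - w a)) * Nat.nth Nat.Prime (g a + 1)

variable {w : V → ℕ} {t N : ℕ} {g : V → ℕ}

lemma thresholdLabel_pos (a : V) : 0 < thresholdLabel w t N g a := by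
  unfold thresholdLabel
  have := (Nat.prime_nth_prime (g a + 1)).pos
  split_ifs <;> positivity

lemma thresholdLabel_injective (hg : Function.Injective g) (hgN : ∀ a, g a < N) :
    Function.Injective (thresholdLabel w t N g) := by
  intro a b h
  unfold thresholdLabel at h
  split_ifs at h with ha hb hb
  · have := congrArg (· % N) (Nat.add_right_cancel (Nat.pow_right_injective le_rfl h))
    simp only [mul_comm N, Nat.mul_add_mod_of_lt (hgN a), Nat.mul_add_mod_of_lt (hgN b)] at this
    exact hg this
  · exact (Nat.not_two_pow_mul_dvd_two_pow (Nat.prime_nth_prime _)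
      (Nat.nth_prime_add_one_ne_two _) _ _ (dvd_of_eq h.symm)).elim
  · exact (Nat.not_two_pow_mul_dvd_two_pow (Nat.prime_nth_prime _)
      (Nat.nth_prime_add_one_ne_two _) _ _ (dvd_of_eq h)).elim
  · exact hg (Nat.add_right_cancel (Nat.nth_injective Nat.infinite_setOfPred_prime
      (Nat.eq_of_two_pow_mul_dvd_two_pow_mul (Nat.prime_nth_prime _)
        (Nat.nth_prime_add_one_ne_two _) (Nat.prime_nth_prime _) (dvd_of_eq h))))

lemma add_lt_iff_thresholdLabel_dvd_of_lt_of_le (hgN : ∀ a, g a < N) {a b : V}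
    (ha : 2 * w a < t) (hb : t ≤ 2 * w b) :
    w a + w b < t ↔ thresholdLabel w t N g a ∣ thresholdLabel w t N g b ∨
      thresholdLabel w t N g b ∣ thresholdLabel w t N g a := by
  simp only [thresholdLabel, if_pos ha, if_neg hb.not_gt,
    Nat.two_pow_dvd_two_pow_mul_iff (Nat.prime_nth_prime _) (Nat.nth_prime_add_one_ne_two _),
    Nat.not_two_pow_mul_dvd_two_pow (Nat.prime_nth_prime _) (Nat.nth_prime_add_one_ne_two _),
    or_false, Nat.add_one_le_iff, Nat.mul_add_lt_mul_iff_lt (hgN a)]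
  omega

lemma add_lt_iff_thresholdLabel_dvd (hg : Function.Injective g) (hgN : ∀ a, g a < N) {a b : V}
    (hab : a ≠ b) :
    w a + w b < t ↔ thresholdLabel w t N g a ∣ thresholdLabel w t N g b ∨
      thresholdLabel w t N g b ∣ thresholdLabel w t N g a := by
  rcases lt_or_ge (2 * w a) t with ha | ha <;> rcases lt_or_ge (2 * w b) t with hb | hb
  · simp only [thresholdLabel, if_pos ha, if_pos hb, Nat.pow_dvd_pow_iff_le_right one_lt_two]
    omega
  · exact add_lt_iff_thresholdLabel_dvd_of_lt_of_le hgN ha hb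
  · rw [add_comm, or_comm]
    exact add_lt_iff_thresholdLabel_dvd_of_lt_of_le hgN hb ha
  · have hne : Nat.nth Nat.Prime (g a + 1) ≠ Nat.nth Nat.Prime (g b + 1) :=
      fun h => hab (hg (Nat.add_right_cancel (Nat.nth_injective Nat.infinite_setOfPred_prime h)))
    simp only [thresholdLabel, if_neg ha.not_gt, if_neg hb.not_gt]
    refine iff_of_false (by omega) ?_
    rintro (h | h)
    · exact hne (Nat.eq_of_two_pow_mul_dvd_two_pow_mul (Nat.prime_nth_prime _)
        (Nat.nth_prime_add_one_ne_two _) (Nat.prime_nth_prime _) h)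
    · exact hne (Nat.eq_of_two_pow_mul_dvd_two_pow_mul (Nat.prime_nth_prime _)
        (Nat.nth_prime_add_one_ne_two _) (Nat.prime_nth_prime _) h).symm

theorem thresholdGraph_isDivisorGraph [Finite V] (w : V → ℕ) (t : ℕ) :
    IsDivisorGraph (thresholdGraph w t) := by
  obtain ⟨N, ⟨e⟩⟩ := Finite.exists_equiv_fin V
  have hg : Function.Injective (fun a => (e a : ℕ)) := Fin.val_injective.comp e.injective
  have hgN : ∀ a, (e a : ℕ) < N := fun a => (e a).isLt
  refine ⟨thresholdLabel w t N (fun a => e a), thresholdLabel_injective hg hgN,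
    thresholdLabel_pos, fun a b hab => ?_⟩
  rw [← add_lt_iff_thresholdLabel_dvd hg hgN hab]
  exact and_iff_right hab

end ThresholdGraph

theorem compZDGraph_isDivisorGraph_of_local_general (R : Type*) [CommRing R] [Fintype R]
    [IsLocalRing R] [IsPrincipalIdealRing R] (n : ℕ)
    (hn : IsLocalRing.maximalIdeal R ^ n = ⊥) :
    IsDivisorGraph (compZDGraph R) := by
  obtain ⟨p, hp⟩ := (IsPrincipalIdealRing.principal (IsLocalRing.maximalIdeal R)).principal
  have hM : IsLocalRing.maximalIdeal R = Ideal.span {p} := hp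
  have hnil : IsNilpotent p := by
    have := Ideal.pow_mem_pow (hM ▸ Ideal.mem_span_singleton_self p : p ∈ _) n
    rw [hn, Ideal.mem_bot] at this
    exact ⟨n, this⟩
  choose w hw using fun a : ZDVertex R =>
    IsLocalRing.exists_associated_pow_of_ne_zero hM hnil a.2.1
  have hadj : compZDGraph R = thresholdGraph w (nilpotencyClass p) := by
    ext a b
    simp only [compZDGraph, thresholdGraph, ← ((hw a).mul_mul (hw b)).ne_zero_iff, ← pow_add,
      ne_eq, pow_eq_zero_iff_nilpotencyClass_le hnil, not_le]
  rw [hadj]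
  exact thresholdGraph_isDivisorGraph w _

theorem compZDGraph_isDivisorGraph_of_local (R : Type*) [CommRing R] [Fintype R]
    [IsLocalRing R] [IsPrincipalIdealRing R] (n : ℕ)
    (hn : IsLocalRing.maximalIdeal R ^ n = ⊥)
    (hn' : IsLocalRing.maximalIdeal R ^ (n - 1) ≠ ⊥) :
    IsDivisorGraph (compZDGraph R) :=
  compZDGraph_isDivisorGraph_of_local_general R n hn
end

section
/- Any graph containing, as an induced subgraph, the graph on vertices {A,B,C,D,E,F,G} with edge set {AC, AD, AE, AF, AG, BD, BE, CE, CF, CG, DE, DG, EG} is not a divisor graph. -/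
/-- The 7-vertex graph of Figure 1, with `0,…,6` standing for `A,…,G` and edge
set `{AC, AD, AE, AF, AG, BD, BE, CE, CF, CG, DE, DG, EG}`. -/
def figGraph : SimpleGraph (Fin 7) :=
  SimpleGraph.fromRel (fun u v => (u, v) ∈
    ([(0,2),(0,3),(0,4),(0,5),(0,6),(1,3),(1,4),(2,4),(2,5),(2,6),(3,4),(3,6),(4,6)] :
      List (Fin 7 × Fin 7)))

instance : DecidableRel figGraph.Adj := fun u v =>
  decidable_of_iff _ (SimpleGraph.fromRel_adj _ u v).symm

theorem not_isDivisorGraph_of_figGraph_induced {W : Type*} (H : SimpleGraph W)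
    (g : Fin 7 → W) (hg : Function.Injective g)
    (hind : ∀ u v : Fin 7, figGraph.Adj u v ↔ H.Adj (g u) (g v)) :
    ¬ IsDivisorGraph H := by
  rintro ⟨f, _finj, _fpos, hf⟩
  have key : ∀ u v : Fin 7, u ≠ v →
      (figGraph.Adj u v ↔ f (g u) ∣ f (g v) ∨ f (g v) ∣ f (g u)) := by
    intro u v huv
    rw [hind]
    exact hf _ _ (fun h => huv (hg h))
  set a := f (g 0) with ha
  set b := f (g 1) with hb
  set c := f (g 2) with hc
  set d := f (g 3) with hd
  set e := f (g 4) with he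
  set p := f (g 5) with hp
  set q := f (g 6) with hq
  -- edges
  have hAC : a ∣ c ∨ c ∣ a := (key 0 2 (by decide)).mp (by decide)
  have hAD : a ∣ d ∨ d ∣ a := (key 0 3 (by decide)).mp (by decide)
  have hAE : a ∣ e ∨ e ∣ a := (key 0 4 (by decide)).mp (by decide)
  have hAF : a ∣ p ∨ p ∣ a := (key 0 5 (by decide)).mp (by decide)
  have hAG : a ∣ q ∨ q ∣ a := (key 0 6 (by decide)).mp (by decide)
  have hBD : b ∣ d ∨ d ∣ b := (key 1 3 (by decide)).mp (by decide)
  have hBE : b ∣ e ∨ e ∣ b := (key 1 4 (by decide)).mp (by decide)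
  have hCE : c ∣ e ∨ e ∣ c := (key 2 4 (by decide)).mp (by decide)
  have hCF : c ∣ p ∨ p ∣ c := (key 2 5 (by decide)).mp (by decide)
  have hCG : c ∣ q ∨ q ∣ c := (key 2 6 (by decide)).mp (by decide)
  have hDE : d ∣ e ∨ e ∣ d := (key 3 4 (by decide)).mp (by decide)
  have hDG : d ∣ q ∨ q ∣ d := (key 3 6 (by decide)).mp (by decide)
  have hEG : e ∣ q ∨ q ∣ e := (key 4 6 (by decide)).mp (by decide)
  -- non-edges
  have nAB : ¬ (a ∣ b ∨ b ∣ a) := fun h =>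
    (by decide : ¬ figGraph.Adj 0 1) ((key 0 1 (by decide)).mpr h)
  have nBC : ¬ (b ∣ c ∨ c ∣ b) := fun h =>
    (by decide : ¬ figGraph.Adj 1 2) ((key 1 2 (by decide)).mpr h)
  have nBG : ¬ (b ∣ q ∨ q ∣ b) := fun h =>
    (by decide : ¬ figGraph.Adj 1 6) ((key 1 6 (by decide)).mpr h)
  have nCD : ¬ (c ∣ d ∨ d ∣ c) := fun h =>
    (by decide : ¬ figGraph.Adj 2 3) ((key 2 3 (by decide)).mpr h)
  have nDF : ¬ (d ∣ p ∨ p ∣ d) := fun h =>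
    (by decide : ¬ figGraph.Adj 3 5) ((key 3 5 (by decide)).mpr h)
  have nEF : ¬ (e ∣ p ∨ p ∣ e) := fun h =>
    (by decide : ¬ figGraph.Adj 4 5) ((key 4 5 (by decide)).mpr h)
  have nFG : ¬ (p ∣ q ∨ q ∣ p) := fun h =>
    (by decide : ¬ figGraph.Adj 5 6) ((key 5 6 (by decide)).mpr h)
  rcases hAE with hae | hea
  · -- Case a ∣ e : then e is a common multiple of b,c,d,q and a divides c,d,p,q
    have hbe : b ∣ e := hBE.resolve_right (fun h => nAB (Or.inl (hae.trans h)))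
    have hce : c ∣ e := hCE.resolve_right (fun h => nBC (Or.inl (hbe.trans h)))
    have hde : d ∣ e := hDE.resolve_right (fun h => nCD (Or.inl (hce.trans h)))
    have hqe : q ∣ e := hEG.resolve_left (fun h => nBG (Or.inl (hbe.trans h)))
    have hap : a ∣ p := hAF.resolve_right (fun h => nEF (Or.inr (h.trans hae)))
    have had : a ∣ d := hAD.resolve_right (fun h => nDF (Or.inl (h.trans hap)))
    have hac : a ∣ c := hAC.resolve_right (fun h => nCD (Or.inl (h.trans had)))
    have hcp : c ∣ p := hCF.resolve_right (fun h => nEF (Or.inr (h.trans hce)))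
    have hcq : c ∣ q := hCG.resolve_right (fun h => nFG (Or.inr (h.trans hcp)))
    have hdq : d ∣ q := hDG.resolve_right (fun h => nCD (Or.inl (hcq.trans h)))
    have hbd : b ∣ d := hBD.resolve_right (fun h => nAB (Or.inl (had.trans h)))
    exact nBG (Or.inl (hbd.trans hdq))
  · -- Case e ∣ a : mirror argument
    have heb : e ∣ b := hBE.resolve_left (fun h => nAB (Or.inr (h.trans hea)))
    have hec : e ∣ c := hCE.resolve_left (fun h => nBC (Or.inr (h.trans heb)))
    have hed : e ∣ d := hDE.resolve_left (fun h => nCD (Or.inr (h.trans hec)))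
    have heq : e ∣ q := hEG.resolve_right (fun h => nBG (Or.inr (h.trans heb)))
    have hpa : p ∣ a := hAF.resolve_left (fun h => nEF (Or.inl (hea.trans h)))
    have hda : d ∣ a := hAD.resolve_left (fun h => nDF (Or.inr (hpa.trans h)))
    have hca : c ∣ a := hAC.resolve_left (fun h => nCD (Or.inr (hda.trans h)))
    have hpc : p ∣ c := hCF.resolve_left (fun h => nEF (Or.inl (hec.trans h)))
    have hqc : q ∣ c := hCG.resolve_left (fun h => nFG (Or.inl (hpc.trans h)))
    have hqd : q ∣ d := hDG.resolve_left (fun h => nCD (Or.inr (h.trans hqc)))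
    have hdb : d ∣ b := hBD.resolve_left (fun h => nAB (Or.inr (h.trans hda)))
    exact nBG (Or.inr (hqd.trans hdb))
end

section
/- The specific oriented graph on vertices {A,B,C,D,E,F,G} with edges {AC, AD, AE, AF, AG, BD, BE, CE, CF, CG, DE, DG, EG} admits no orientation in which every vertex is a transmitter, a receiver, or a transitive vertex. -/
/-! If every vertex is a transmitter, a receiver or transitive, the arc relation is transitive.
In a transitive orientation the two edges of an induced path `u - t - v` point both towards `t`
or both away from it. With `A, …, G` numbered `0, …, 6`, chasing this along induced paths gives
`F → C ↔ G → C ↔ G → D ↔ B → D ↔ A → D` and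
`F → C ↔ E → C ↔ E → B ↔ E → A ↔ F → A ↔ D → A`, so `AD` would be oriented both ways. -/

/-- An orientation of a simple graph: each edge gets exactly one direction. -/
structure GraphOrientation {V : Type*} (G : SimpleGraph V) where
  arc : V → V → Prop
  consistent : ∀ u v, G.Adj u v ↔ (arc u v ∨ arc v u)
  asymm : ∀ u v, arc u v → ¬ arc v u

namespace GraphOrientation
variable {V : Type*} {G : SimpleGraph V} (D : GraphOrientation G)

/-- A transmitter has positive out-degree and zero in-degree. -/
def IsTransmitter (t : V) : Prop := (∃ v, D.arc t v) ∧ ∀ u, ¬ D.arc u t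

/-- A receiver has positive in-degree and zero out-degree. -/
def IsReceiver (t : V) : Prop := (∃ u, D.arc u t) ∧ ∀ v, ¬ D.arc t v

/-- A transitive vertex has positive in- and out-degree, and `u → t`, `t → v`
imply `u → v`. -/
def IsTransitiveVertex (t : V) : Prop :=
  (∃ u, D.arc u t) ∧ (∃ v, D.arc t v) ∧ ∀ u v, D.arc u t → D.arc t v → D.arc u v

end GraphOrientation

namespace GraphOrientation

variable {V : Type*} {G : SimpleGraph V} (D : GraphOrientation G)

theorem adj_of_arc {u v : V} (h : D.arc u v) : G.Adj u v :=
  (D.consistent u v).2 (Or.inl h)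

theorem arc_swap_iff {u v : V} (h : G.Adj u v) : D.arc v u ↔ ¬ D.arc u v :=
  ⟨fun hvu huv => D.asymm _ _ huv hvu, ((D.consistent u v).1 h).resolve_left⟩

theorem isTrans_arc_of_forall
    (hD : ∀ v, D.IsTransmitter v ∨ D.IsReceiver v ∨ D.IsTransitiveVertex v) :
    IsTrans V D.arc := by
  refine ⟨fun u t v hut htv => ?_⟩
  rcases hD t with ⟨-, hin⟩ | ⟨-, hout⟩ | ⟨-, -, htrans⟩
  · exact absurd hut (hin u)
  · exact absurd htv (hout v)
  · exact htrans u v hut htv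

theorem arc_iff_arc_of_not_adj (hD : IsTrans V D.arc) {u t v : V} (hut : G.Adj u t)
    (hvt : G.Adj v t) (huv : ¬ G.Adj u v) : D.arc u t ↔ D.arc v t := by
  suffices h : ∀ {u v}, G.Adj v t → ¬ G.Adj u v → D.arc u t → D.arc v t from
    ⟨h hvt huv, h hut (mt G.adj_symm huv)⟩
  intro u v hvt huv hut
  exact ((D.consistent t v).1 hvt.symm).resolve_left
    fun htv => huv (D.adj_of_arc (hD.trans _ _ _ hut htv))

theorem arc_iff_arc_of_not_adj' (hD : IsTrans V D.arc) {u t v : V} (hut : G.Adj u t)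
    (hvt : G.Adj v t) (huv : ¬ G.Adj u v) : D.arc t u ↔ D.arc t v := by
  rw [D.arc_swap_iff hut, D.arc_swap_iff hvt, D.arc_iff_arc_of_not_adj hD hut hvt huv]

end GraphOrientation

theorem figGraph_no_good_orientation :
    ¬ ∃ D : GraphOrientation figGraph, ∀ v : Fin 7,
      D.IsTransmitter v ∨ D.IsReceiver v ∨ D.IsTransitiveVertex v := by
  rintro ⟨D, hD⟩
  have htrans := D.isTrans_arc_of_forall hD
  have hFC_AD : D.arc 5 2 ↔ D.arc 0 3 := by
    calc D.arc 5 2 ↔ D.arc 6 2 := D.arc_iff_arc_of_not_adj htrans ?_ ?_ ?_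
      _ ↔ D.arc 6 3 := D.arc_iff_arc_of_not_adj' htrans ?_ ?_ ?_
      _ ↔ D.arc 1 3 := D.arc_iff_arc_of_not_adj htrans ?_ ?_ ?_
      _ ↔ D.arc 0 3 := D.arc_iff_arc_of_not_adj htrans ?_ ?_ ?_
    all_goals simp [figGraph]
  have hFC_DA : D.arc 5 2 ↔ D.arc 3 0 := by
    calc D.arc 5 2 ↔ D.arc 4 2 := D.arc_iff_arc_of_not_adj htrans ?_ ?_ ?_
      _ ↔ D.arc 4 1 := D.arc_iff_arc_of_not_adj' htrans ?_ ?_ ?_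
      _ ↔ D.arc 4 0 := D.arc_iff_arc_of_not_adj' htrans ?_ ?_ ?_
      _ ↔ D.arc 5 0 := D.arc_iff_arc_of_not_adj htrans ?_ ?_ ?_
      _ ↔ D.arc 3 0 := D.arc_iff_arc_of_not_adj htrans ?_ ?_ ?_
    all_goals simp [figGraph]
  have hAD : figGraph.Adj 0 3 := by simp [figGraph]
  exact iff_not_self ((hFC_AD.symm.trans hFC_DA).trans (D.arc_swap_iff hAD))
end

section
/- Let R₁ and R₂ be finite integral domains and R = R₁ × R₂. Then the complement of the zero-divisor graph of R is a divisor graph; in fact it is a disjoint union of two complete graphs. -/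
/-!
In a product of two domains a nonzero zero-divisor has exactly one zero coordinate, and the
product of two such elements is nonzero iff their zero coordinates are in the same place. So the
complement of `Γ(R₁ × R₂)` is the disjoint union of the cliques `{(0, b)}` and `{(a, 0)}`. Such a
graph is a divisor graph: enumerate the (countably many) vertices and label the `n`-th vertex of
the first clique by `2 ^ (n + 1)` and of the second by `3 ^ (n + 1)`.
-/

theorem Nat.Prime.pow_succ_dvd_pow_succ_iff {p q m n : ℕ} (hp : p.Prime) (hq : q.Prime) :
    p ^ (m + 1) ∣ q ^ (n + 1) ↔ p = q ∧ m ≤ n := by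
  constructor
  · intro h
    obtain rfl : p = q := (Nat.prime_dvd_prime_iff_eq hp hq).mp
      (hp.dvd_of_dvd_pow ((dvd_pow_self p m.succ_ne_zero).trans h))
    exact ⟨rfl, by simpa using (Nat.pow_dvd_pow_iff_le_right hp.one_lt).mp h⟩
  · rintro ⟨rfl, hmn⟩
    exact Nat.pow_dvd_pow p (by omega)

theorem isDivisorGraph_of_adj_iff_eq_prime {V : Type*} [Countable V] (G : SimpleGraph V)
    (c : V → ℕ) (hc : ∀ v, (c v).Prime) (hG : ∀ u v, u ≠ v → (G.Adj u v ↔ c u = c v)) :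
    IsDivisorGraph G := by
  obtain ⟨e, he⟩ := Countable.exists_injective_nat V
  have hdvd : ∀ u v, c u ^ (e u + 1) ∣ c v ^ (e v + 1) ↔ c u = c v ∧ e u ≤ e v := fun u v =>
    (hc u).pow_succ_dvd_pow_succ_iff (hc v)
  refine ⟨fun v => c v ^ (e v + 1), fun u v huv => he ?_, fun v => pow_pos (hc v).pos _,
    fun u v huv => ?_⟩
  · have h₁ := (hdvd u v).mp huv.dvd
    have h₂ := (hdvd v u).mp huv.symm.dvd
    omega
  · rw [hG u v huv, hdvd, hdvd]
    constructor
    · intro h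
      rcases le_total (e u) (e v) with h' | h'
      exacts [Or.inl ⟨h, h'⟩, Or.inr ⟨h.symm, h'⟩]
    · rintro (⟨h, -⟩ | ⟨h, -⟩)
      exacts [h, h.symm]

theorem isDivisorGraph_of_adj_iff_iff {V : Type*} [Countable V] (G : SimpleGraph V)
    (P : V → Prop) (hG : ∀ u v, u ≠ v → (G.Adj u v ↔ (P u ↔ P v))) : IsDivisorGraph G := by
  classical
  refine isDivisorGraph_of_adj_iff_eq_prime G (fun v => if P v then 2 else 3)
    (fun v => by split_ifs <;> norm_num) fun u v huv => ?_
  rw [hG u v huv]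
  by_cases hu : P u <;> by_cases hv : P v <;> simp [hu, hv]

theorem Prod.fst_eq_zero_or_snd_eq_zero_of_mul_eq_zero {M₁ M₂ : Type*} [MulZeroClass M₁]
    [NoZeroDivisors M₁] [MulZeroClass M₂] [NoZeroDivisors M₂] {a b : M₁ × M₂} (hb : b ≠ 0)
    (hab : a * b = 0) : a.1 = 0 ∨ a.2 = 0 := by
  rw [Ne, Prod.ext_iff] at hb
  simp only [Prod.ext_iff, Prod.fst_mul, Prod.snd_mul, Prod.fst_zero, Prod.snd_zero,
    mul_eq_zero] at hab hb
  tauto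

section ProdOfDomains

variable {R₁ R₂ : Type*} [CommRing R₁] [NoZeroDivisors R₁] [CommRing R₂] [NoZeroDivisors R₂]

theorem ZDVertex.fst_eq_zero_iff_snd_ne_zero (x : ZDVertex (R₁ × R₂)) :
    x.val.1 = 0 ↔ x.val.2 ≠ 0 := by
  obtain ⟨hx, b, hb, hxb⟩ := x.prop
  have := Prod.fst_eq_zero_or_snd_eq_zero_of_mul_eq_zero hb hxb
  rw [Ne, Prod.ext_iff] at hx
  tauto

theorem compZDGraph_prod_adj_iff {x y : ZDVertex (R₁ × R₂)} (hxy : x ≠ y) :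
    (compZDGraph (R₁ × R₂)).Adj x y ↔ (x.val.1 = 0 ↔ y.val.1 = 0) := by
  have hx := ZDVertex.fst_eq_zero_iff_snd_ne_zero x
  have hy := ZDVertex.fst_eq_zero_iff_snd_ne_zero y
  simp only [compZDGraph, ne_eq, hxy, not_false_eq_true, true_and, Prod.ext_iff, Prod.fst_mul,
    Prod.snd_mul, Prod.fst_zero, Prod.snd_zero, mul_eq_zero]
  tauto

end ProdOfDomains

theorem compZDGraph_prod_domains (R₁ R₂ : Type*) [CommRing R₁] [IsDomain R₁] [Fintype R₁]
    [CommRing R₂] [IsDomain R₂] [Fintype R₂] :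
    IsDivisorGraph (compZDGraph (R₁ × R₂)) ∧
    ∀ x y : ZDVertex (R₁ × R₂), x ≠ y →
      ((compZDGraph (R₁ × R₂)).Adj x y ↔
        (x.val.1 = 0 ∧ y.val.1 = 0) ∨ (x.val.2 = 0 ∧ y.val.2 = 0)) := by
  refine ⟨isDivisorGraph_of_adj_iff_iff _ _ fun x y hxy => compZDGraph_prod_adj_iff hxy,
    fun x y hxy => ?_⟩
  have hx := ZDVertex.fst_eq_zero_iff_snd_ne_zero x
  have hy := ZDVertex.fst_eq_zero_iff_snd_ne_zero y
  rw [compZDGraph_prod_adj_iff hxy]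
  tauto
end

section
/- Let R₁ be a finite integral domain and R₂ a finite commutative ring whose set of zero-divisors is {0, a} for a single nonzero element a (so diam(Γ(R₂)) = 0). Then the complement of the zero-divisor graph of R₁ × R₂ is a divisor graph. -/
/-! Since `R₁` is a domain and the only zero-divisors of `R₂` are `0` and `a` (with `a * a = 0`),
a vertex `(x, y)` of `Γ(R₁ × R₂)` is `(0, y)` with `y` regular, `(0, a)`, `(x, 0)` or `(x, a)` with
`x ≠ 0`. In the complement the first two kinds form a clique, the last two form a clique, and
`(0, y)` is joined to `(x, a)`; nothing else. `prodZDCoord` places these vertices in `ℕ × ℕ` so that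
adjacency is comparability in the product order, and `(m, n) ↦ 2 ^ m * 3 ^ n` turns that order into
divisibility. -/

theorem Nat.two_pow_mul_three_pow_dvd_iff {a b c d : ℕ} :
    2 ^ a * 3 ^ b ∣ 2 ^ c * 3 ^ d ↔ a ≤ c ∧ b ≤ d := by
  refine ⟨fun h => ⟨?_, ?_⟩, fun ⟨hac, hbd⟩ => mul_dvd_mul (pow_dvd_pow 2 hac) (pow_dvd_pow 3 hbd)⟩
  · refine (Nat.pow_dvd_pow_iff_le_right (by norm_num : 1 < 2)).1 ?_
    exact (Nat.Coprime.pow a d (by norm_num)).dvd_of_dvd_mul_right ((dvd_mul_right _ _).trans h)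
  · refine (Nat.pow_dvd_pow_iff_le_right (by norm_num : 1 < 3)).1 ?_
    exact (Nat.Coprime.pow b c (by norm_num)).dvd_of_dvd_mul_left ((dvd_mul_left _ _).trans h)

theorem isDivisorGraph_of_adj_iff_le_or_le {V : Type*} (G : SimpleGraph V) (g : V → ℕ × ℕ)
    (hg : Function.Injective g) (hadj : ∀ u v, u ≠ v → (G.Adj u v ↔ g u ≤ g v ∨ g v ≤ g u)) :
    IsDivisorGraph G := by
  have hdvd (u v : V) : 2 ^ (g u).1 * 3 ^ (g u).2 ∣ 2 ^ (g v).1 * 3 ^ (g v).2 ↔ g u ≤ g v :=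
    Nat.two_pow_mul_three_pow_dvd_iff.trans Prod.le_def.symm
  refine ⟨fun v => 2 ^ (g v).1 * 3 ^ (g v).2, fun u v h => hg ?_, fun v => by positivity,
    fun u v huv => by rw [hadj u v huv, hdvd, hdvd]⟩
  exact le_antisymm ((hdvd u v).1 h.dvd) ((hdvd v u).1 h.symm.dvd)

theorem mul_eq_zero_iff_of_zeroDivisors_eq_pair {R : Type*} [CommRing R] {a : R} (ha : a ≠ 0)
    (hZ : {x : R | ∃ b : R, b ≠ 0 ∧ x * b = 0} = {0, a}) {y z : R} :
    y * z = 0 ↔ y = 0 ∨ z = 0 ∨ (y = a ∧ z = a) := by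
  have hmem (x : R) (b : R) (hb : b ≠ 0) (h : x * b = 0) : x = 0 ∨ x = a := by
    simpa using hZ.subset ⟨b, hb, h⟩
  have haa : a * a = 0 := by
    obtain ⟨b, hb, hab⟩ : ∃ b : R, b ≠ 0 ∧ a * b = 0 := hZ.superset (by simp)
    obtain rfl := (hmem b a ha (by rwa [mul_comm])).resolve_left hb
    exact hab
  refine ⟨fun h => ?_, by rintro (rfl | rfl | ⟨rfl, rfl⟩) <;> simp [haa]⟩
  by_contra! hyz
  obtain ⟨hy, hz, hyz⟩ := hyz
  exact hyz ((hmem y z hz h).resolve_left hy) ((hmem z y hy (by rwa [mul_comm])).resolve_left hz)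

theorem Prod.exists_ne_zero_snd_mul_eq_zero {R₁ R₂ : Type*} [CommRing R₁] [NoZeroDivisors R₁]
    [CommRing R₂] {p : R₁ × R₂} (hp : p.1 ≠ 0) (h : ∃ b : R₁ × R₂, b ≠ 0 ∧ p * b = 0) :
    ∃ c : R₂, c ≠ 0 ∧ p.2 * c = 0 := by
  obtain ⟨⟨b, c⟩, hbc, h⟩ := h
  obtain ⟨h1, h2⟩ := Prod.mk_eq_zero.1 h
  obtain rfl := (mul_eq_zero.1 h1).resolve_left hp
  exact ⟨c, fun hc => hbc (by simp [hc]), h2⟩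

section Coordinates

variable {R₁ R₂ : Type*} [Fintype R₁] [DecidableEq R₁] [Fintype R₂] [DecidableEq R₂]

/-- The `Fintype.card` offsets put `(0, y)` below `(0, a)` and `(x, a)`, and `(x, 0)` below
`(x, a)`, while `(0, a)` stays incomparable with `(x, 0)` and `(x, a)`. -/
noncomputable def prodZDCoord [Zero R₁] [Zero R₂] (a : R₂) (p : R₁ × R₂) : ℕ × ℕ :=
  if p.1 = 0 then
    if p.2 = a then (Fintype.card R₂ + 1, 0) else (Fintype.equivFin R₂ p.2 + 1, 0)
  else
    if p.2 = a then (Fintype.card R₂, Fintype.card R₁ + Fintype.equivFin R₁ p.1 + 1)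
    else (0, Fintype.equivFin R₁ p.1 + 1)

theorem prodZDCoord_injOn [Zero R₁] [Zero R₂] (a : R₂) :
    Set.InjOn (prodZDCoord a) {p : R₁ × R₂ | p.1 ≠ 0 → p.2 = 0 ∨ p.2 = a} := by
  rintro ⟨x₁, y₁⟩ h₁ ⟨x₂, y₂⟩ h₂ h
  simp only [Set.mem_ofPred_eq] at h₁ h₂
  simp only [prodZDCoord] at h
  have := (Fintype.equivFin R₁ x₁).isLt
  have := (Fintype.equivFin R₁ x₂).isLt
  have := (Fintype.equivFin R₂ y₁).isLt
  have := (Fintype.equivFin R₂ y₂).isLt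
  split_ifs at h <;> simp only [Prod.ext_iff, add_left_inj, add_right_inj,
    Fin.val_inj, EmbeddingLike.apply_eq_iff_eq] at h ⊢ <;> grind

theorem prodZDCoord_le_or_le_iff [CommRing R₁] [NoZeroDivisors R₁] [CommRing R₂] {a : R₂}
    (ha : a ≠ 0) (hmul : ∀ y z : R₂, y * z = 0 ↔ y = 0 ∨ z = 0 ∨ (y = a ∧ z = a))
    {p q : R₁ × R₂} (hp : p ≠ 0) (hq : q ≠ 0) (hp' : p.1 ≠ 0 → p.2 = 0 ∨ p.2 = a)
    (hq' : q.1 ≠ 0 → q.2 = 0 ∨ q.2 = a) (hpq : p ≠ q) :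
    p * q ≠ 0 ↔ prodZDCoord a p ≤ prodZDCoord a q ∨ prodZDCoord a q ≤ prodZDCoord a p := by
  obtain ⟨x₁, y₁⟩ := p
  obtain ⟨x₂, y₂⟩ := q
  have := (Fintype.equivFin R₁ x₁).isLt
  have := (Fintype.equivFin R₁ x₂).isLt
  have := (Fintype.equivFin R₂ y₁).isLt
  have := (Fintype.equivFin R₂ y₂).isLt
  simp only [ne_eq, Prod.mk_mul_mk, Prod.mk_eq_zero, mul_eq_zero, hmul] at hp hq hpq ⊢
  simp only [prodZDCoord]
  split_ifs <;> simp only [Prod.mk_le_mk] <;> grind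

end Coordinates

theorem compZDGraph_prod_domain_diamZero (R₁ R₂ : Type*) [CommRing R₁] [IsDomain R₁]
    [Fintype R₁] [CommRing R₂] [Fintype R₂] (a : R₂) (ha : a ≠ 0)
    (hZ : {x : R₂ | ∃ b : R₂, b ≠ 0 ∧ x * b = 0} = {0, a}) :
    IsDivisorGraph (compZDGraph (R₁ × R₂)) := by
  classical
  have hmul (y z : R₂) := mul_eq_zero_iff_of_zeroDivisors_eq_pair ha hZ (y := y) (z := z)
  have hsnd (v : ZDVertex (R₁ × R₂)) : v.1.1 ≠ 0 → v.1.2 = 0 ∨ v.1.2 = a := fun hx => by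
    simpa using hZ.subset (Prod.exists_ne_zero_snd_mul_eq_zero hx v.2.2)
  refine isDivisorGraph_of_adj_iff_le_or_le _ (fun v => prodZDCoord a v.1)
    (fun u v h => Subtype.ext (prodZDCoord_injOn a (hsnd u) (hsnd v) h)) fun u v huv => ?_
  exact (and_iff_right huv).trans
    (prodZDCoord_le_or_le_iff ha hmul u.2.1 v.2.1 (hsnd u) (hsnd v) (Subtype.coe_ne_coe.2 huv))
end

section
/- Let R₁ and R₂ be finite commutative rings, each having exactly one nonzero zero-divisor (so neither is an integral domain and diam(Γ(Rᵢ)) = 0). Then the complement of the zero-divisor graph of R₁ × R₂ is not a divisor graph. -/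
/-
If `a` is the only nonzero zero-divisor of `R₁`, then `a² = 0`, and likewise `b² = 0` in `R₂`.
Hence the seven nonzero non-units of `{0, a, 1} × {0, b, 1}` are zero-divisors of `R₁ × R₂`, and
the complement of `Γ(R₁ × R₂)` induces on them the 7-vertex non-divisor graph. Divisor graphs are
closed under induced subgraphs, and this graph is not a divisor graph: it is not even the
comparability graph of a transitive relation, since orienting the edge `EA` forces, one edge after
another, an orientation of its other edges that makes the non-adjacent `A` and `B` comparable.
-/

theorem IsDivisorGraph.of_embedding {V W : Type*} {G : SimpleGraph V} {H : SimpleGraph W}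
    (e : G ↪g H) (hH : IsDivisorGraph H) : IsDivisorGraph G := by
  obtain ⟨f, hinj, hpos, hf⟩ := hH
  exact ⟨f ∘ e, hinj.comp e.injective, fun v => hpos (e v),
    fun u v huv => e.map_adj_iff.symm.trans (hf _ _ (e.injective.ne huv))⟩

theorem mul_self_eq_zero_of_zeroDivisors_eq_pair {R : Type*} [CommRing R] {a : R} (ha : a ≠ 0)
    (hZ : {x : R | ∃ c : R, c ≠ 0 ∧ x * c = 0} = {0, a}) : a * a = 0 := by
  obtain ⟨c, hc, hac⟩ : a ∈ {x : R | ∃ c : R, c ≠ 0 ∧ x * c = 0} := by simp [hZ]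
  have hc' : c ∈ ({0, a} : Set R) := hZ ▸ ⟨a, ha, by rw [mul_comm, hac]⟩
  rcases hc' with rfl | rfl
  exacts [absurd rfl hc, hac]

theorem ne_one_of_mul_self_eq_zero {M : Type*} [MulZeroOneClass M] [Nontrivial M] {a : M}
    (h : a * a = 0) : a ≠ 1 := by
  rintro rfl
  exact one_ne_zero (one_mul (1 : M) ▸ h)

inductive Seven
  | A | B | C | D | E | F | G
  deriving DecidableEq

namespace Seven

def edge : Seven → Seven → Bool
  | A, C | A, D | A, E | A, F | A, G | B, D | B, E | C, E | C, F | C, G | D, E | D, G | E, G => true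
  | _, _ => false

def graph : SimpleGraph Seven := SimpleGraph.fromRel fun x y => edge x y

instance : DecidableRel graph.Adj := fun _ _ => decidable_of_iff' _ (SimpleGraph.fromRel_adj _ _ _)

theorem false_of_adj_iff_comparable {α : Type*} {r : α → α → Prop} [IsTrans α r] (f : Seven → α)
    (hf : ∀ x y, x ≠ y → (graph.Adj x y ↔ r (f x) (f y) ∨ r (f y) (f x))) (hEA : r (f E) (f A)) :
    False := by
  -- Each edge's orientation is forced by the previous ones: the other orientation would make
  -- a non-adjacent pair comparable by transitivity.
  have orient : ∀ x y, graph.Adj x y → ¬ r (f y) (f x) → r (f x) (f y) :=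
    fun _ _ h => ((hf _ _ h.ne).1 h).resolve_right
  have incomp : ∀ x y, graphᶜ.Adj x y → ¬ r (f x) (f y) :=
    fun _ _ h hr => h.2 ((hf _ _ h.1).2 (Or.inl hr))
  have hFA := orient F A (by decide) fun h => incomp E F (by decide) (_root_.trans hEA h)
  have hDA := orient D A (by decide) fun h => incomp F D (by decide) (_root_.trans hFA h)
  have hEB := orient E B (by decide) fun h => incomp B A (by decide) (_root_.trans h hEA)
  have hEC := orient E C (by decide) fun h => incomp C B (by decide) (_root_.trans h hEB)
  have hFC := orient F C (by decide) fun h => incomp E F (by decide) (_root_.trans hEC h)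
  have hGC := orient G C (by decide) fun h => incomp F G (by decide) (_root_.trans hFC h)
  have hGD := orient G D (by decide) fun h => incomp D C (by decide) (_root_.trans h hGC)
  have hBD := orient B D (by decide) fun h => incomp G B (by decide) (_root_.trans hGD h)
  exact incomp B A (by decide) (_root_.trans hBD hDA)

theorem not_isDivisorGraph_graph : ¬ IsDivisorGraph graph := by
  rintro ⟨f, -, -, hf⟩
  -- The reversed divisibility relation handles the orientation `f A ∣ f E`.
  rcases (hf A E (by decide)).1 (by decide) with hAE | hEA
  · exact false_of_adj_iff_comparable (r := Function.swap (· ∣ ·)) f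
      (fun x y hxy => (hf x y hxy).trans or_comm) hAE
  · exact false_of_adj_iff_comparable f hf hEA

section Point

variable {R₁ R₂ : Type*} [CommRing R₁] [CommRing R₂] {a : R₁} {b : R₂}

-- The nonzero non-units of `{0, a, 1} × {0, b, 1}`.
def point (a : R₁) (b : R₂) : Seven → R₁ × R₂
  | .A => (1, b) | .B => (0, b) | .C => (1, 0) | .D => (0, 1) | .E => (a, 1) | .F => (a, 0)
  | .G => (a, b)

def mate : Seven → Seven
  | .A => .B | .B => .A | .C => .D | .D => .C | .E => .F | .F => .E | .G => .G

theorem point_mul_point_mate (haa : a * a = 0) (hbb : b * b = 0) (x : Seven) :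
    point a b x * point a b x.mate = 0 := by
  cases x <;> simp [point, mate, Prod.ext_iff, haa, hbb]

variable [Nontrivial R₁] [Nontrivial R₂]

theorem point_ne_zero (ha : a ≠ 0) (hb : b ≠ 0) (x : Seven) : point a b x ≠ 0 := by
  cases x <;> simp [point, Prod.ext_iff, ha, hb]

theorem point_injective (ha : a ≠ 0) (hb : b ≠ 0) (haa : a * a = 0) (hbb : b * b = 0) :
    Function.Injective (point a b) := by
  have ha1 := ne_one_of_mul_self_eq_zero haa
  have hb1 := ne_one_of_mul_self_eq_zero hbb
  intro x y h
  cases x <;> cases y <;> simp_all [point, Prod.ext_iff, eq_comm]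

theorem graph_adj_iff_point_mul_ne_zero (ha : a ≠ 0) (hb : b ≠ 0) (haa : a * a = 0)
    (hbb : b * b = 0) {x y : Seven} : graph.Adj x y ↔ x ≠ y ∧ point a b x * point a b y ≠ 0 := by
  cases x <;> cases y <;> simp [graph, edge, point, Prod.ext_iff, ha, hb, haa, hbb]

def embeddingCompZDGraph (ha : a ≠ 0) (hb : b ≠ 0) (haa : a * a = 0) (hbb : b * b = 0) :
    graph ↪g compZDGraph (R₁ × R₂) where
  toFun x := ⟨point a b x, point_ne_zero ha hb x, point a b x.mate,
    point_ne_zero ha hb x.mate, point_mul_point_mate haa hbb x⟩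
  inj' _ _ h := point_injective ha hb haa hbb (congrArg Subtype.val h)
  map_rel_iff' {x y} := by
    rw [graph_adj_iff_point_mul_ne_zero ha hb haa hbb]
    exact and_congr_left' (Subtype.ext_iff.not.trans (point_injective ha hb haa hbb).ne_iff)

end Point

end Seven

theorem compZDGraph_prod_not_divisorGraph_general (R₁ R₂ : Type*) [CommRing R₁]
    [CommRing R₂] (a : R₁) (b : R₂) (ha : a ≠ 0) (hb : b ≠ 0)
    (hZ₁ : {x : R₁ | ∃ c : R₁, c ≠ 0 ∧ x * c = 0} = {0, a})
    (hZ₂ : {x : R₂ | ∃ c : R₂, c ≠ 0 ∧ x * c = 0} = {0, b}) :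
    ¬ IsDivisorGraph (compZDGraph (R₁ × R₂)) := by
  have : Nontrivial R₁ := nontrivial_of_ne a 0 ha
  have : Nontrivial R₂ := nontrivial_of_ne b 0 hb
  have haa := mul_self_eq_zero_of_zeroDivisors_eq_pair ha hZ₁
  have hbb := mul_self_eq_zero_of_zeroDivisors_eq_pair hb hZ₂
  exact fun h =>
    Seven.not_isDivisorGraph_graph (h.of_embedding (Seven.embeddingCompZDGraph ha hb haa hbb))

theorem compZDGraph_prod_not_divisorGraph (R₁ R₂ : Type*) [CommRing R₁] [Fintype R₁]
    [CommRing R₂] [Fintype R₂] (a : R₁) (b : R₂) (ha : a ≠ 0) (hb : b ≠ 0)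
    (hZ₁ : {x : R₁ | ∃ c : R₁, c ≠ 0 ∧ x * c = 0} = {0, a})
    (hZ₂ : {x : R₂ | ∃ c : R₂, c ≠ 0 ∧ x * c = 0} = {0, b}) :
    ¬ IsDivisorGraph (compZDGraph (R₁ × R₂)) :=
  compZDGraph_prod_not_divisorGraph_general R₁ R₂ a b ha hb hZ₁ hZ₂
end

section
/- Let R₁ and R₂ be finite commutative rings such that diam(Γ(R₁)) = 1 and diam(Γ(R₂)) = 1 (i.e., each has at least two nonzero zero-divisors and any two distinct nonzero zero-divisors multiply to zero). Then the complement of the zero-divisor graph of R₁ × R₂ is not a divisor graph. -/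
open Relation

namespace Relation.SymmGen
variable {α : Type*} {r : α → α → Prop} [IsTrans α r] {x y z : α}

theorem rel_of_rel_of_incompRel (hyz : SymmGen r y z) (hxy : r x y)
    (hxz : IncompRel r x z) : r z y :=
  hyz.resolve_left fun h => hxz.1 (_root_.trans hxy h)

theorem rel_of_rel_of_incompRel' (hyz : SymmGen r y z) (hyx : r y x)
    (hxz : IncompRel r x z) : r y z :=
  hyz.resolve_right fun h => hxz.2 (_root_.trans h hyx)

end Relation.SymmGen

theorem false_of_symmGen_heptagon {α : Type*} {r : α → α → Prop} [IsTrans α r] {a b c d e f g : α}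
    (hab : SymmGen r a b) (hbc : SymmGen r b c) (hcd : SymmGen r c d) (hde : SymmGen r d e)
    (hef : SymmGen r e f) (hfg : SymmGen r f g) (hga : SymmGen r g a) (hbf : SymmGen r b f)
    (hdg : SymmGen r d g) (hac : IncompRel r a c) (had : IncompRel r a d)
    (haf : IncompRel r a f) (hbd : IncompRel r b d) (hbe : IncompRel r b e)
    (hce : IncompRel r c e) (heg : IncompRel r e g) : False := by
  wlog hrab : r a b generalizing r
  · rw [← symmGen_swap] at hab hbc hcd hde hef hfg hga hbf hdg
    rw [← incompRel_swap] at hac had haf hbd hbe hce heg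
    exact this hab hbc hcd hde hef hfg hga hbf hdg hac had haf hbd hbe hce heg
      (hab.resolve_right hrab)
  have hrcb := hbc.rel_of_rel_of_incompRel hrab hac
  have hrcd := hcd.rel_of_rel_of_incompRel' hrcb hbd
  have hred := hde.rel_of_rel_of_incompRel hrcd hce
  have hrgd := hdg.rel_of_rel_of_incompRel hred heg
  have hrga := hga.rel_of_rel_of_incompRel' hrgd had.symm
  have hrgf := hfg.symm.rel_of_rel_of_incompRel' hrga haf
  have href := hef.symm.rel_of_rel_of_incompRel hrgf heg.symm
  have hrbf := hbf.symm.rel_of_rel_of_incompRel href hbe.symm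
  exact haf.1 (_root_.trans hrab hrbf)

theorem IsDivisorGraph.exists_dvd_labeling_compZDGraph {R : Type*} [CommRing R]
    (h : IsDivisorGraph (compZDGraph R)) :
    ∃ ℓ : ZDVertex R → ℕ,
      (∀ p q : ZDVertex R, p.val * q.val ≠ 0 → SymmGen (· ∣ ·) (ℓ p) (ℓ q)) ∧
      ∀ p q : ZDVertex R, p ≠ q → p.val * q.val = 0 → IncompRel (· ∣ ·) (ℓ p) (ℓ q) := by
  obtain ⟨ℓ, -, -, hℓ⟩ := h
  refine ⟨ℓ, fun p q hpq => ?_, fun p q hne hpq => ?_⟩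
  · rcases eq_or_ne p q with rfl | hne
    · exact SymmGen.rfl
    · exact (hℓ p q hne).1 ⟨hne, hpq⟩
  · exact not_symmGen_iff.1 fun h => ((hℓ p q hne).2 h).2 hpq

theorem not_isDivisorGraph_compZDGraph_prod {R₁ R₂ : Type*} [CommRing R₁] [CommRing R₂]
    {x y : R₁} (hx : x ≠ 0) (hy : y ≠ 0) (hxy : x * y = 0)
    {u v : R₂} (hu : u ≠ 0) (hv : v ≠ 0) (huv : u * v = 0) :
    ¬ IsDivisorGraph (compZDGraph (R₁ × R₂)) := by
  intro hG
  obtain ⟨ℓ, hcomp, hincomp⟩ := hG.exists_dvd_labeling_compZDGraph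
  have : Nontrivial R₁ := nontrivial_of_ne x 0 hx
  have : Nontrivial R₂ := nontrivial_of_ne u 0 hu
  have hyx : y * x = 0 := by rw [mul_comm, hxy]
  have hvu : v * u = 0 := by rw [mul_comm, huv]
  let a : ZDVertex (R₁ × R₂) := ⟨(0, u), by simp [hu], (1, 0), by simp, by simp⟩
  let b : ZDVertex (R₁ × R₂) := ⟨(0, 1), by simp, (1, 0), by simp, by simp⟩
  let c : ZDVertex (R₁ × R₂) := ⟨(y, v), by simp [hy], (x, 0), by simp [hx], by simp [hyx]⟩
  let d : ZDVertex (R₁ × R₂) := ⟨(1, 0), by simp, (0, 1), by simp, by simp⟩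
  let e : ZDVertex (R₁ × R₂) := ⟨(x, 0), by simp [hx], (0, 1), by simp, by simp⟩
  let f : ZDVertex (R₁ × R₂) := ⟨(1, v), by simp, (0, u), by simp [hu], by simp [hvu]⟩
  let g : ZDVertex (R₁ × R₂) := ⟨(y, 1), by simp [hy], (x, 0), by simp [hx], by simp [hyx]⟩
  exact false_of_symmGen_heptagon
    (hcomp a b (by simp [a, b, hu])) (hcomp b c (by simp [b, c, hv]))
    (hcomp c d (by simp [c, d, hy])) (hcomp d e (by simp [d, e, hx]))
    (hcomp e f (by simp [e, f, hx])) (hcomp f g (by simp [f, g, hv]))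
    (hcomp g a (by simp [g, a, hu])) (hcomp b f (by simp [b, f, hv]))
    (hcomp d g (by simp [d, g, hy]))
    (hincomp a c (by simp [a, c, Subtype.ext_iff, hy.symm]) (by simp [a, c, huv]))
    (hincomp a d (by simp [a, d, Subtype.ext_iff]) (by simp [a, d]))
    (hincomp a f (by simp [a, f, Subtype.ext_iff]) (by simp [a, f, huv]))
    (hincomp b d (by simp [b, d, Subtype.ext_iff]) (by simp [b, d]))
    (hincomp b e (by simp [b, e, Subtype.ext_iff, hx.symm]) (by simp [b, e]))
    (hincomp c e (by simp [c, e, Subtype.ext_iff, hv]) (by simp [c, e, hyx]))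
    (hincomp e g (by simp [e, g, Subtype.ext_iff]) (by simp [e, g, hxy]))

theorem compZDGraph_prod_diamOne_not_divisorGraph_general (R₁ R₂ : Type*) [CommRing R₁]
    [CommRing R₂]
    (h₁ : ∃ x y : R₁, x ≠ y ∧ (x ≠ 0 ∧ ∃ c ≠ 0, x * c = 0) ∧ (y ≠ 0 ∧ ∃ c ≠ 0, y * c = 0))
    (h₂ : ∃ x y : R₂, x ≠ y ∧ (x ≠ 0 ∧ ∃ c ≠ 0, x * c = 0) ∧ (y ≠ 0 ∧ ∃ c ≠ 0, y * c = 0)) :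
    ¬ IsDivisorGraph (compZDGraph (R₁ × R₂)) := by
  obtain ⟨x, -, -, ⟨hx, y, hy, hxy⟩, -⟩ := h₁
  obtain ⟨u, -, -, ⟨hu, v, hv, huv⟩, -⟩ := h₂
  exact not_isDivisorGraph_compZDGraph_prod hx hy hxy hu hv huv

theorem compZDGraph_prod_diamOne_not_divisorGraph (R₁ R₂ : Type*) [CommRing R₁] [Fintype R₁]
    [CommRing R₂] [Fintype R₂]
    (h₁ : ∃ x y : R₁, x ≠ y ∧ (x ≠ 0 ∧ ∃ c ≠ 0, x * c = 0) ∧ (y ≠ 0 ∧ ∃ c ≠ 0, y * c = 0))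
    (h₁' : ∀ x y : R₁, x ≠ 0 → (∃ c ≠ 0, x * c = 0) → y ≠ 0 → (∃ c ≠ 0, y * c = 0) →
      x ≠ y → x * y = 0)
    (h₂ : ∃ x y : R₂, x ≠ y ∧ (x ≠ 0 ∧ ∃ c ≠ 0, x * c = 0) ∧ (y ≠ 0 ∧ ∃ c ≠ 0, y * c = 0))
    (h₂' : ∀ x y : R₂, x ≠ 0 → (∃ c ≠ 0, x * c = 0) → y ≠ 0 → (∃ c ≠ 0, y * c = 0) →
      x ≠ y → x * y = 0) :
    ¬ IsDivisorGraph (compZDGraph (R₁ × R₂)) :=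
  compZDGraph_prod_diamOne_not_divisorGraph_general R₁ R₂ h₁ h₂
end

section
/- Let R₁ be a finite integral domain and R₂ a finite local principal ideal ring with diam(Γ(R₂)) = 2, with Z(R₂) = yR₂ where y^l = 0 and y^{l-1} ≠ 0. Then the complement of the zero-divisor graph of R₁ × R₂ is a divisor graph. -/
/-!
Every nonunit of the finite ring `R₂` is a zero-divisor, hence a multiple of `y`; since `y` is
nilpotent, every `b : R₂` is `y ^ k b * u` with `u` a unit and `k b ≤ l`, and `b * c = 0` iff
`l ≤ k b + k c`. So two vertices `(a, b)`, `(a', b')` of the complement graph are adjacent iff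
`a ≠ 0 ≠ a'` or `k b + k b' < l`. A graph of this shape is the comparability graph of an explicit
order on `(ℤ ×ₗ ℤ) × (ℤ ×ₗ ℤ)`, and the comparability graph of a finite poset is a divisor graph:
label `x` by the product of distinct primes indexed by the elements below `x`.
-/

open Function

theorem IsDivisorGraph.of_adj_iff_le_or_le {V α : Type*} [Finite V] [PartialOrder α]
    (G : SimpleGraph V) (φ : V → α) (hφ : Injective φ)
    (hadj : ∀ u v, u ≠ v → (G.Adj u v ↔ φ u ≤ φ v ∨ φ v ≤ φ u)) : IsDivisorGraph G := by
  classical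
  have := Fintype.ofFinite V
  obtain ⟨ι, hι⟩ := Countable.exists_injective_nat V
  set p : V → ℕ := fun v => Nat.nth Nat.Prime (ι v)
  have hp : ∀ v, (p v).Prime := fun v => Nat.prime_nth_prime _
  have hp_inj : Injective p := (Nat.nth_injective Nat.infinite_setOfPred_prime).comp hι
  set f : V → ℕ := fun v => ∏ w ∈ Finset.univ.filter (φ · ≤ φ v), p w
  have hf_dvd : ∀ u v, f u ∣ f v ↔ φ u ≤ φ v := by
    refine fun u v => ⟨fun h => ?_, fun h => Finset.prod_dvd_prod_of_subset _ _ _ ?_⟩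
    · have hpu : p u ∣ f v := (Finset.dvd_prod_of_mem p (by simp)).trans h
      obtain ⟨w, hw, hpw⟩ := ((hp u).prime.dvd_finsetProd_iff p).mp hpu
      rw [(Nat.prime_dvd_prime_iff_eq (hp u) (hp w)).mp hpw |> hp_inj]
      simpa using hw
    · intro w
      simpa using fun hw => hw.trans h
  refine ⟨f, fun u v h => hφ ?_, fun v => Finset.prod_pos fun w _ => (hp w).pos, ?_⟩
  · exact le_antisymm ((hf_dvd u v).mp h.dvd) ((hf_dvd v u).mp h.symm.dvd)
  · intro u v huv
    rw [hadj u v huv, hf_dvd, hf_dvd]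

/-- The parities of `2 * s` and `2 * (l - s) - 1` keep keys with distinct `(top, s)` from tying in
either coordinate, so the tie-breaker `ι` only matters between keys with equal `top` and `s`: it
makes them a chain when `top` or `2 * s < l`, and an antichain (through `-ι`) otherwise. -/
def thresholdKey (l : ℤ) (top : Bool) (s ι : ℤ) : (ℤ ×ₗ ℤ) × (ℤ ×ₗ ℤ) :=
  if top then (toLex (2 * (l - s) - 1, ι), toLex (2 * l - s, ι))
  else (toLex (2 * s, ι), toLex (min (2 * s) (2 * (l - s) - 1), if 2 * s < l then ι else -ι))

theorem thresholdKey_le_or_le_iff {l s s' ι ι' : ℤ} {top top' : Bool}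
    (hs : top → s ≤ l) (hs' : top' → s' ≤ l) (hι : ι ≠ ι') :
    thresholdKey l top s ι ≤ thresholdKey l top' s' ι' ∨
        thresholdKey l top' s' ι' ≤ thresholdKey l top s ι ↔
      (top ∧ top') ∨ s + s' < l := by
  cases top <;> cases top' <;>
    simp only [thresholdKey, Bool.false_eq_true, if_true, if_false, Prod.mk_le_mk,
      Prod.Lex.toLex_le_toLex, min_def, true_and, false_and, false_or, true_or, forall_const,
      and_self, iff_true] at hs hs' ⊢ <;>
    (try split_ifs) <;> omega

@[simp]
theorem ofLex_thresholdKey_fst_snd (l : ℤ) (top : Bool) (s ι : ℤ) :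
    (ofLex (thresholdKey l top s ι).1).2 = ι := by
  cases top <;> rfl

theorem IsDivisorGraph.of_adj_iff_and_or_add_lt {V : Type*} [Finite V] (G : SimpleGraph V)
    (K : V → Prop) (s : V → ℤ) (l : ℤ) (hK : ∀ v, K v → s v ≤ l)
    (hadj : ∀ u v, u ≠ v → (G.Adj u v ↔ (K u ∧ K v) ∨ s u + s v < l)) : IsDivisorGraph G := by
  classical
  obtain ⟨ι, hι⟩ := Countable.exists_injective_nat V
  refine .of_adj_iff_le_or_le G (fun v => thresholdKey l (K v) (s v) (ι v)) ?_ fun u v huv => ?_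
  · intro u v h
    exact hι (by simpa using congrArg (fun k => (ofLex k.1).2) h)
  · rw [hadj u v huv, thresholdKey_le_or_le_iff (by simpa using hK u) (by simpa using hK v)
      (by exact_mod_cast hι.ne huv)]
    simp

theorem pow_eq_zero_iff_le_of_pow_pred_ne_zero {M : Type*} [MonoidWithZero M] {y : M} {l k : ℕ}
    (hl : y ^ l = 0) (hl' : y ^ (l - 1) ≠ 0) : y ^ k = 0 ↔ l ≤ k :=
  ⟨fun hk => by_contra fun h => hl' (pow_eq_zero_of_le (by omega) hk),
    fun h => pow_eq_zero_of_le h hl⟩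

theorem exists_le_eq_pow_mul_isUnit {M : Type*} [CommMonoidWithZero M] {y : M} {l : ℕ}
    (hy : ∀ r : M, ¬IsUnit r → y ∣ r) (hl : y ^ l = 0) (b : M) :
    ∃ k ≤ l, ∃ u, IsUnit u ∧ b = y ^ k * u := by
  have peel : ∀ n ≤ l, (∃ k < n, ∃ u, IsUnit u ∧ b = y ^ k * u) ∨ y ^ n ∣ b := by
    intro n
    induction n with
    | zero => simp
    | succ n ih =>
      intro hn
      rcases ih (by omega) with ⟨k, hk, hb⟩ | ⟨c, rfl⟩
      · exact .inl ⟨k, by omega, hb⟩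
      by_cases hc : IsUnit c
      · exact .inl ⟨n, by omega, c, hc, rfl⟩
      · obtain ⟨d, rfl⟩ := hy c hc
        exact .inr ⟨d, by rw [pow_succ, mul_assoc]⟩
  rcases peel l le_rfl with ⟨k, hk, hb⟩ | hdvd
  · exact ⟨k, hk.le, hb⟩
  · exact ⟨l, le_rfl, 1, isUnit_one, by rw [hl, zero_mul]; exact zero_dvd_iff.mp (hl ▸ hdvd)⟩

theorem mul_eq_zero_iff_le_add {M : Type*} [CommMonoidWithZero M] {y b c u w : M} {l k m : ℕ}
    (hl : y ^ l = 0) (hl' : y ^ (l - 1) ≠ 0) (hu : IsUnit u) (hw : IsUnit w)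
    (hb : b = y ^ k * u) (hc : c = y ^ m * w) : b * c = 0 ↔ l ≤ k + m := by
  rw [hb, hc, mul_mul_mul_comm, ← pow_add, (hu.mul hw).mul_left_eq_zero,
    pow_eq_zero_iff_le_of_pow_pred_ne_zero hl hl']

theorem dvd_of_not_isUnit_of_zeroDivisors_eq {R : Type*} [CommRing R] [Finite R] {y : R}
    (hZ : {x : R | ∃ b : R, b ≠ 0 ∧ x * b = 0} = {x : R | ∃ r : R, x = y * r})
    (r : R) (hr : ¬IsUnit r) : y ∣ r := by
  rw [isUnit_iff_mem_nonZeroDivisors_of_finite, mem_nonZeroDivisors_iff_right] at hr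
  push Not at hr
  obtain ⟨b, hbr, hb⟩ := hr
  have hr : r ∈ {x : R | ∃ b : R, b ≠ 0 ∧ x * b = 0} := ⟨b, hb, mul_comm b r ▸ hbr⟩
  rw [hZ] at hr
  exact hr

theorem compZDGraph_prod_domain_diamTwo_general (R₁ R₂ : Type*) [CommRing R₁] [IsDomain R₁]
    [Fintype R₁] [CommRing R₂] [Fintype R₂]
    (y : R₂) (l : ℕ)
    (hZ : {x : R₂ | ∃ b : R₂, b ≠ 0 ∧ x * b = 0} = {x : R₂ | ∃ r : R₂, x = y * r})
    (hl : y ^ l = 0) (hl' : y ^ (l - 1) ≠ 0) :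
    IsDivisorGraph (compZDGraph (R₁ × R₂)) := by
  choose k hkl u hu hb using
    exists_le_eq_pow_mul_isUnit (dvd_of_not_isUnit_of_zeroDivisors_eq hZ) hl
  refine .of_adj_iff_and_or_add_lt _ (fun v => v.val.1 ≠ 0) (fun v => k v.val.2) l
    (fun v _ => by exact_mod_cast hkl _) fun v w hvw => ?_
  have hmul : v.val * w.val = 0 ↔ (v.val.1 = 0 ∨ w.val.1 = 0) ∧ l ≤ k v.val.2 + k w.val.2 := by
    rw [Prod.ext_iff, Prod.fst_mul, Prod.snd_mul, Prod.fst_zero, Prod.snd_zero, mul_eq_zero,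
      mul_eq_zero_iff_le_add hl hl' (hu _) (hu _) (hb _) (hb _)]
  change v ≠ w ∧ ¬v.val * w.val = 0 ↔ _
  rw [hmul]
  norm_cast
  simp only [hvw, not_false_eq_true, true_and, not_and_or, not_or, not_le]

theorem compZDGraph_prod_domain_diamTwo (R₁ R₂ : Type*) [CommRing R₁] [IsDomain R₁]
    [Fintype R₁] [CommRing R₂] [Fintype R₂] [IsLocalRing R₂] [IsPrincipalIdealRing R₂]
    (y : R₂) (l : ℕ)
    (hdiam : (zeroDivisorGraph R₂).diam = 2)
    (hZ : {x : R₂ | ∃ b : R₂, b ≠ 0 ∧ x * b = 0} = {x : R₂ | ∃ r : R₂, x = y * r})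
    (hl : y ^ l = 0) (hl' : y ^ (l - 1) ≠ 0) :
    IsDivisorGraph (compZDGraph (R₁ × R₂)) :=
  compZDGraph_prod_domain_diamTwo_general R₁ R₂ y l hZ hl hl'
end

section
/- Every complete bipartite graph is a divisor graph. -/
lemma aux_dvd {p q : ℕ} (hpq : Nat.Coprime p q) (hp : 1 < p) (hq : 1 < q)
    {a b c d : ℕ} (h : p ^ a * q ^ b ∣ p ^ c * q ^ d) : a ≤ c ∧ b ≤ d := by
  constructor
  · have h1 : p ^ a ∣ p ^ c * q ^ d := dvd_trans (dvd_mul_right _ _) h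
    have h2 : (p ^ a).Coprime (q ^ d) := Nat.Coprime.pow _ _ hpq
    exact (Nat.pow_dvd_pow_iff_le_right hp).mp (h2.dvd_of_dvd_mul_right h1)
  · have h1 : q ^ b ∣ p ^ c * q ^ d := dvd_trans (dvd_mul_left _ _) h
    have h2 : (q ^ b).Coprime (p ^ c) := Nat.Coprime.pow _ _ hpq.symm
    exact (Nat.pow_dvd_pow_iff_le_right hq).mp (h2.dvd_of_dvd_mul_left h1)

theorem completeBipartiteGraph_isDivisorGraph (V W : Type*) [Fintype V] [Fintype W] :
    IsDivisorGraph (completeBipartiteGraph V W) := by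
  classical
  set n := Fintype.card V with hn
  set m := Fintype.card W with hm
  let e := Fintype.equivFin V
  let g := Fintype.equivFin W
  refine ⟨fun x => Sum.elim (fun v => 2 ^ (e v : ℕ) * 3 ^ (n - (e v : ℕ)))
    (fun w => 6 ^ n * (2 ^ (g w : ℕ) * 5 ^ (m - (g w : ℕ)))) x, ?_, ?_, ?_⟩
  · -- injectivity
    intro x y h
    have c23 : Nat.Coprime 2 3 := by decide
    have c25 : Nat.Coprime 2 5 := by decide
    cases x with
    | inl v => cases y with
      | inl v' =>
        simp only [Sum.elim_inl] at h
        have h1 := aux_dvd c23 (by norm_num) (by norm_num) h.dvd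
        have h2 := aux_dvd c23 (by norm_num) (by norm_num) h.symm.dvd
        have : (e v : ℕ) = (e v') := le_antisymm h1.1 h2.1
        exact congrArg Sum.inl (e.injective (Fin.ext this))
      | inr w =>
        exfalso
        simp only [Sum.elim_inl, Sum.elim_inr] at h
        have hvn : (e v : ℕ) < n := (e v).2
        have hlt : 2 ^ (e v : ℕ) * 3 ^ (n - (e v : ℕ)) < 6 ^ n := by
          have h2 : 2 ^ (e v : ℕ) < 2 ^ n := Nat.pow_lt_pow_right (by norm_num) hvn
          have h3 : 3 ^ (n - (e v : ℕ)) ≤ 3 ^ n := Nat.pow_le_pow_right (by norm_num) (Nat.sub_le _ _)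
          calc 2 ^ (e v : ℕ) * 3 ^ (n - (e v : ℕ)) < 2 ^ n * 3 ^ n := by
                exact Nat.mul_lt_mul_of_lt_of_le h2 h3 (by positivity)
            _ = 6 ^ n := by rw [← Nat.mul_pow]
        have hge : 6 ^ n ≤ 6 ^ n * (2 ^ (g w : ℕ) * 5 ^ (m - (g w : ℕ))) :=
          Nat.le_mul_of_pos_right _ (by positivity)
        omega
    | inr w => cases y with
      | inl v =>
        exfalso
        simp only [Sum.elim_inl, Sum.elim_inr] at h
        have hvn : (e v : ℕ) < n := (e v).2
        have hlt : 2 ^ (e v : ℕ) * 3 ^ (n - (e v : ℕ)) < 6 ^ n := by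
          have h2 : 2 ^ (e v : ℕ) < 2 ^ n := Nat.pow_lt_pow_right (by norm_num) hvn
          have h3 : 3 ^ (n - (e v : ℕ)) ≤ 3 ^ n := Nat.pow_le_pow_right (by norm_num) (Nat.sub_le _ _)
          calc 2 ^ (e v : ℕ) * 3 ^ (n - (e v : ℕ)) < 2 ^ n * 3 ^ n := by
                exact Nat.mul_lt_mul_of_lt_of_le h2 h3 (by positivity)
            _ = 6 ^ n := by rw [← Nat.mul_pow]
        have hge : 6 ^ n ≤ 6 ^ n * (2 ^ (g w : ℕ) * 5 ^ (m - (g w : ℕ))) :=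
          Nat.le_mul_of_pos_right _ (by positivity)
        omega
      | inr w' =>
        simp only [Sum.elim_inr] at h
        have h0 : (0:ℕ) < 6 ^ n := by positivity
        have h' : 2 ^ (g w : ℕ) * 5 ^ (m - (g w : ℕ)) = 2 ^ (g w' : ℕ) * 5 ^ (m - (g w' : ℕ)) :=
          Nat.eq_of_mul_eq_mul_left h0 h
        have h1 := aux_dvd c25 (by norm_num) (by norm_num) h'.dvd
        have h2 := aux_dvd c25 (by norm_num) (by norm_num) h'.symm.dvd
        have : (g w : ℕ) = (g w') := le_antisymm h1.1 h2.1
        exact congrArg Sum.inr (g.injective (Fin.ext this))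
  · -- positivity
    rintro (v | w) <;> simp only [Sum.elim_inl, Sum.elim_inr] <;> positivity
  · -- adjacency
    intro u v huv
    have c23 : Nat.Coprime 2 3 := by decide
    have c25 : Nat.Coprime 2 5 := by decide
    have cross : ∀ (a : V) (b : W), 2 ^ (e a : ℕ) * 3 ^ (n - (e a : ℕ)) ∣
        6 ^ n * (2 ^ (g b : ℕ) * 5 ^ (m - (g b : ℕ))) := by
      intro a b
      refine dvd_trans ?_ (dvd_mul_right _ _)
      have : (6:ℕ) ^ n = 2 ^ n * 3 ^ n := by rw [← Nat.mul_pow]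
      rw [this]
      exact Nat.mul_dvd_mul (Nat.pow_dvd_pow _ (le_of_lt (e a).2))
        (Nat.pow_dvd_pow _ (Nat.sub_le _ _))
    cases u with
    | inl a => cases v with
      | inl a' =>
        simp only [completeBipartiteGraph_adj, Sum.elim_inl]
        constructor
        · rintro (⟨h1, h2⟩ | ⟨h1, h2⟩) <;> simp at h1 h2
        · rintro (h | h) <;>
          · exfalso
            have h1 := aux_dvd c23 (by norm_num) (by norm_num) h
            have ha : (e a : ℕ) < n := (e a).2
            have ha' : (e a' : ℕ) < n := (e a').2
            have : (e a : ℕ) = (e a') := by omega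
            exact huv (congrArg Sum.inl (e.injective (Fin.ext this)))
      | inr b =>
        simp only [completeBipartiteGraph_adj, Sum.elim_inl, Sum.elim_inr]
        constructor
        · intro _; exact Or.inl (cross a b)
        · intro _; simp
    | inr b => cases v with
      | inl a =>
        simp only [completeBipartiteGraph_adj, Sum.elim_inl, Sum.elim_inr]
        constructor
        · intro _; exact Or.inr (cross a b)
        · intro _; simp
      | inr b' =>
        simp only [completeBipartiteGraph_adj, Sum.elim_inr]
        constructor
        · rintro (⟨h1, h2⟩ | ⟨h1, h2⟩) <;> simp at h1 h2
        · rintro (h | h) <;>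
          · exfalso
            have h0 : (0:ℕ) < 6 ^ n := by positivity
            have h' := (Nat.mul_dvd_mul_iff_left h0).mp h
            have h1 := aux_dvd c25 (by norm_num) (by norm_num) h'
            have hb : (g b : ℕ) < m := (g b).2
            have hb' : (g b' : ℕ) < m := (g b').2
            have : (g b : ℕ) = (g b') := by omega
            exact huv (congrArg Sum.inr (g.injective (Fin.ext this)))
end

section
/- Let R be a commutative ring with exactly two associated primes p₁ and p₂ satisfying p₁ ∩ p₂ = {0}. Then the zero-divisor graph Γ(R) is a complete bipartite graph with parts p₁ \ {0} and p₂ \ {0}: every element of p₁ \ {0} multiplies to 0 with every element of p₂ \ {0}, and no two distinct elements within the same part multiply to 0. -/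
/-!
Since `p₁ ∩ p₂ = 0`, products of elements of `p₁` with elements of `p₂` vanish, and an element
lying in both ideals is zero. If `ab = 0` with `b ≠ 0`, primality of `p₁` and `p₂` puts `a` in one
of them; if moreover `a, b` lie in the same `pᵢ`, primality of the other ideal puts one of them in
both, so it is zero. Conversely, every `r` in an associated prime is a zero divisor: `rⁿ x = 0` for
some `x ≠ 0`, and for the least such `n`, `rⁿ⁻¹ x` is a nonzero element killed by `r`.
-/

open Submodule

theorem IsAssociatedPrime.exists_ne_zero_smul_eq_zero {R M : Type*} [CommSemiring R]
    [AddCommMonoid M] [Module R M] {I : Ideal R} (h : IsAssociatedPrime I M) {r : R}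
    (hr : r ∈ I) : ∃ m : M, m ≠ 0 ∧ r • m = 0 := by
  classical
  obtain ⟨hI, x, rfl⟩ := h
  have hpow : ∃ n, r ^ n • x = 0 := by
    simpa only [Ideal.mem_radical_iff, mem_colon_singleton, mem_bot] using hr
  have hx : x ≠ 0 := by
    rintro rfl
    exact hI.ne_top (Ideal.radical_eq_top.mpr (by ext; simp [mem_colon_singleton]))
  have hn : Nat.find hpow ≠ 0 := fun h0 => hx (by simpa [h0] using Nat.find_spec hpow)
  refine ⟨r ^ (Nat.find hpow - 1) • x, Nat.find_min hpow (by omega), ?_⟩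
  rw [smul_smul, ← pow_succ', Nat.sub_add_cancel (Nat.pos_of_ne_zero hn)]
  exact Nat.find_spec hpow

namespace Ideal

variable {R : Type*} [CommSemiring R] {p q : Ideal R} {a b : R}

theorem eq_zero_of_mem_of_mem_of_inf_eq_bot (h : p ⊓ q = ⊥) (hp : a ∈ p) (hq : a ∈ q) :
    a = 0 :=
  (Submodule.mem_bot R).mp (h ▸ ⟨hp, hq⟩)

theorem mul_eq_zero_of_inf_eq_bot (h : p ⊓ q = ⊥) (ha : a ∈ p) (hb : b ∈ q) : a * b = 0 :=
  eq_zero_of_mem_of_mem_of_inf_eq_bot h (p.mul_mem_right b ha) (q.mul_mem_left a hb)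

theorem mul_ne_zero_of_inf_eq_bot [q.IsPrime] (h : p ⊓ q = ⊥) (ha : a ∈ p) (hb : b ∈ p)
    (ha0 : a ≠ 0) (hb0 : b ≠ 0) : a * b ≠ 0 := by
  intro hab
  rcases ‹q.IsPrime›.mem_or_mem (hab ▸ q.zero_mem) with haq | hbq
  · exact ha0 (eq_zero_of_mem_of_mem_of_inf_eq_bot h ha haq)
  · exact hb0 (eq_zero_of_mem_of_mem_of_inf_eq_bot h hb hbq)

theorem mem_or_mem_of_mul_eq_zero_of_inf_eq_bot [p.IsPrime] [q.IsPrime] (h : p ⊓ q = ⊥)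
    (hab : a * b = 0) (hb0 : b ≠ 0) : a ∈ p ∨ a ∈ q := by
  rcases ‹p.IsPrime›.mem_or_mem (hab ▸ p.zero_mem) with hap | hbp
  · exact .inl hap
  rcases ‹q.IsPrime›.mem_or_mem (hab ▸ q.zero_mem) with haq | hbq
  · exact .inr haq
  · exact absurd (eq_zero_of_mem_of_mem_of_inf_eq_bot h hbp hbq) hb0

end Ideal

theorem zeroDivisorGraph_completeBipartite_of_ass_general (R : Type*) [CommRing R] (p₁ p₂ : Ideal R)
    (hAss : associatedPrimes R R = {p₁, p₂}) (hint : p₁ ⊓ p₂ = ⊥) :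
    (∀ a ∈ p₁, a ≠ 0 → ∀ b ∈ p₂, b ≠ 0 → a * b = 0) ∧
    (∀ a ∈ p₁, ∀ b ∈ p₁, a ≠ 0 → b ≠ 0 → a ≠ b → a * b ≠ 0) ∧
    (∀ a ∈ p₂, ∀ b ∈ p₂, a ≠ 0 → b ≠ 0 → a ≠ b → a * b ≠ 0) ∧
    {x : R | x ≠ 0 ∧ ∃ b : R, b ≠ 0 ∧ x * b = 0} = ((↑p₁ ∪ ↑p₂ : Set R) \ {0}) := by
  have hp₁ : p₁ ∈ associatedPrimes R R := hAss ▸ Set.mem_insert p₁ {p₂}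
  have hp₂ : p₂ ∈ associatedPrimes R R := hAss ▸ Set.mem_insert_of_mem p₁ rfl
  have := hp₁.isPrime
  have := hp₂.isPrime
  refine ⟨fun a ha _ b hb _ => Ideal.mul_eq_zero_of_inf_eq_bot hint ha hb,
    fun a ha b hb ha0 hb0 _ => Ideal.mul_ne_zero_of_inf_eq_bot hint ha hb ha0 hb0,
    fun a ha b hb ha0 hb0 _ =>
      Ideal.mul_ne_zero_of_inf_eq_bot (inf_comm p₁ p₂ ▸ hint) ha hb ha0 hb0,
    Set.ext fun x => ⟨?_, ?_⟩⟩
  · rintro ⟨hx0, b, hb0, hxb⟩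
    exact ⟨Ideal.mem_or_mem_of_mul_eq_zero_of_inf_eq_bot hint hxb hb0, hx0⟩
  · rintro ⟨hx | hx, hx0⟩
    · exact ⟨hx0, hp₁.exists_ne_zero_smul_eq_zero hx⟩
    · exact ⟨hx0, hp₂.exists_ne_zero_smul_eq_zero hx⟩

theorem zeroDivisorGraph_completeBipartite_of_ass (R : Type*) [CommRing R] (p₁ p₂ : Ideal R)
    (hAss : associatedPrimes R R = {p₁, p₂}) (hne : p₁ ≠ p₂) (hint : p₁ ⊓ p₂ = ⊥) :
    (∀ a ∈ p₁, a ≠ 0 → ∀ b ∈ p₂, b ≠ 0 → a * b = 0) ∧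
    (∀ a ∈ p₁, ∀ b ∈ p₁, a ≠ 0 → b ≠ 0 → a ≠ b → a * b ≠ 0) ∧
    (∀ a ∈ p₂, ∀ b ∈ p₂, a ≠ 0 → b ≠ 0 → a ≠ b → a * b ≠ 0) ∧
    {x : R | x ≠ 0 ∧ ∃ b : R, b ≠ 0 ∧ x * b = 0} = ((↑p₁ ∪ ↑p₂ : Set R) \ {0}) :=
  zeroDivisorGraph_completeBipartite_of_ass_general R p₁ p₂ hAss hint
end

section
/- Let R be a commutative ring with exactly two associated primes p₁ and p₂ satisfying p₁ ∩ p₂ = {0}. Then both the zero-divisor graph Γ(R) and its complement are divisor graphs. -/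
/-!
Every nonzero zero-divisor lies in `p₁ ∪ p₂`, and since `p₁ ⊓ p₂ = ⊥` with both ideals prime,
two nonzero zero-divisors multiply to zero exactly when they lie in different primes.
So `Γ(R)` is complete bipartite with parts `p₁ \ 0` and `p₂ \ 0`, and its complement is the
disjoint union of the two cliques on these parts. A complete bipartite graph on a finite vertex
set is a divisor graph: label one part by distinct primes `p v` and the other by `N * p v`,
where `N` is the product of all these primes. Two disjoint cliques are a divisor graph via the
labels `2 ^ (k + 1)` on one clique and `3 ^ (k + 1)` on the other.
-/

namespace Nat

theorem exists_injective_prime (V : Type*) [Countable V] :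
    ∃ p : V → ℕ, Function.Injective p ∧ ∀ v, (p v).Prime := by
  obtain ⟨e, he⟩ := Countable.exists_injective_nat V
  exact ⟨fun v => nth Nat.Prime (e v), (nth_injective infinite_setOfPred_prime).comp he,
    fun _ => prime_nth_prime _⟩

theorem prime_dvd_prime_iff_of_injective {V : Type*} {p : V → ℕ} (hinj : Function.Injective p)
    (hp : ∀ v, (p v).Prime) {u v : V} : p u ∣ p v ↔ u = v := by
  rw [prime_dvd_prime_iff_eq (hp u) (hp v), hinj.eq_iff]

theorem Prime.pow_dvd_pow_or_pow_dvd_pow_iff {q r a b : ℕ} (hq : q.Prime) (hr : r.Prime)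
    (ha : a ≠ 0) (hb : b ≠ 0) : q ^ a ∣ r ^ b ∨ r ^ b ∣ q ^ a ↔ q = r := by
  constructor
  · rintro (h | h)
    · exact (prime_dvd_prime_iff_eq hq hr).mp
        (hq.dvd_of_dvd_pow ((dvd_pow_self q ha).trans h))
    · exact ((prime_dvd_prime_iff_eq hr hq).mp
        (hr.dvd_of_dvd_pow ((dvd_pow_self r hb).trans h))).symm
  · rintro rfl
    rcases le_total a b with hab | hab
    · exact Or.inl (pow_dvd_pow q hab)
    · exact Or.inr (pow_dvd_pow q hab)

end Nat

section DivisorGraph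

variable {V : Type*} (G : SimpleGraph V) (s : Set V)

theorem isDivisorGraph_of_adj_iff_mem_xor [Finite V]
    (hadj : ∀ u v, u ≠ v → (G.Adj u v ↔ (u ∈ s ↔ v ∉ s))) : IsDivisorGraph G := by
  classical
  have := Fintype.ofFinite V
  obtain ⟨p, hinj, hp⟩ := Nat.exists_injective_prime V
  have hdvd {u v} : p u ∣ p v ↔ u = v := Nat.prime_dvd_prime_iff_of_injective hinj hp
  set N := ∏ v, p v
  have hN : 0 < N := Finset.prod_pos fun v _ => (hp v).pos
  have hdvdN (u v : V) : p u ∣ N * p v :=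
    dvd_mul_of_dvd_left (Finset.dvd_prod_of_mem p (Finset.mem_univ u)) _
  have heq_of_eq_mul {u v} (h : p u = N * p v) : u = v := (hdvd.mp (h ▸ dvd_mul_left _ _)).symm
  refine ⟨fun v => if v ∈ s then p v else N * p v, ?_, ?_, ?_⟩
  · intro u v h
    by_cases hu : u ∈ s <;> by_cases hv : v ∈ s <;> simp only [hu, hv, if_true, if_false] at h
    · exact hinj h
    · exact absurd (heq_of_eq_mul h ▸ hu) hv
    · exact absurd (heq_of_eq_mul h.symm ▸ hv) hu
    · exact hinj (Nat.eq_of_mul_eq_mul_left hN h)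
  · intro v
    dsimp only
    split_ifs
    exacts [(hp v).pos, Nat.mul_pos hN (hp v).pos]
  · intro u v huv
    rw [hadj u v huv]
    by_cases hu : u ∈ s <;> by_cases hv : v ∈ s <;>
      simp only [hu, hv, if_true, if_false, Nat.mul_dvd_mul_iff_left hN, hdvd, hdvdN] <;>
      tauto

theorem isDivisorGraph_of_adj_iff_mem_iff [Countable V]
    (hadj : ∀ u v, u ≠ v → (G.Adj u v ↔ (u ∈ s ↔ v ∈ s))) : IsDivisorGraph G := by
  classical
  obtain ⟨e, he⟩ := Countable.exists_injective_nat V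
  set q : V → ℕ := fun v => if v ∈ s then 2 else 3
  have hq (v : V) : (q v).Prime := by
    simp only [q]; split_ifs
    exacts [Nat.prime_two, Nat.prime_three]
  have hlabel (u v : V) : q u ^ (e u + 1) ∣ q v ^ (e v + 1) ∨ q v ^ (e v + 1) ∣ q u ^ (e u + 1)
      ↔ q u = q v :=
    (hq u).pow_dvd_pow_or_pow_dvd_pow_iff (hq v) (Nat.succ_ne_zero _) (Nat.succ_ne_zero _)
  have hq_eq {u v : V} : q u = q v ↔ (u ∈ s ↔ v ∈ s) := by
    simp only [q]; split_ifs <;> simp_all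
  refine ⟨fun v => q v ^ (e v + 1), ?_, fun v => pow_pos (hq v).pos _, ?_⟩
  · intro u v (h : q u ^ (e u + 1) = q v ^ (e v + 1))
    have hquv : q u = q v := (hlabel u v).mp (Or.inl h.dvd)
    rw [hquv] at h
    exact he (Nat.succ_injective (Nat.pow_right_injective (hq v).two_le h))
  · intro u v huv
    rw [hadj u v huv, hlabel, hq_eq]

end DivisorGraph

section TwoPrimes

variable {R : Type*} [CommRing R] {p₁ p₂ : Ideal R}

theorem mem_or_mem_of_associatedPrimes_eq_pair [IsNoetherianRing R]
    (hAss : associatedPrimes R R = {p₁, p₂}) {a b : R} (hb : b ≠ 0) (hab : a * b = 0) :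
    a ∈ p₁ ∨ a ∈ p₂ := by
  have h : a ∈ {r : R | ∃ x : R, x ≠ 0 ∧ r • x = 0} := ⟨b, hb, hab⟩
  rw [← biUnion_associatedPrimes_eq_zero_divisors R R, hAss] at h
  simpa using h

theorem mul_eq_zero_iff_of_inf_eq_bot [p₁.IsPrime] [p₂.IsPrime] (hint : p₁ ⊓ p₂ = ⊥)
    {a b : R} (ha₀ : a ≠ 0) (hb₀ : b ≠ 0) (ha : a ∈ p₁ ∨ a ∈ p₂) (hb : b ∈ p₁ ∨ b ∈ p₂) :
    a * b = 0 ↔ (a ∈ p₁ ↔ b ∉ p₁) := by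
  have hmem_inf {x : R} (h₁ : x ∈ p₁) (h₂ : x ∈ p₂) : x = 0 :=
    Ideal.mem_bot.mp (hint ▸ Ideal.mem_inf.mpr ⟨h₁, h₂⟩)
  have hmem_two {x : R} (hx₀ : x ≠ 0) (hx : x ∈ p₁ ∨ x ∈ p₂) : x ∈ p₂ ↔ x ∉ p₁ :=
    ⟨fun h₂ h₁ => hx₀ (hmem_inf h₁ h₂), hx.resolve_left⟩
  have hmul {x y : R} (hx : x ∈ p₁) (hy : y ∈ p₂) : x * y = 0 :=
    hmem_inf (p₁.mul_mem_right y hx) (p₂.mul_mem_left x hy)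
  constructor
  · intro h
    have h₁ : a ∈ p₁ ∨ b ∈ p₁ := Ideal.IsPrime.mem_or_mem ‹_› (h ▸ p₁.zero_mem)
    have h₂ : a ∈ p₂ ∨ b ∈ p₂ := Ideal.IsPrime.mem_or_mem ‹_› (h ▸ p₂.zero_mem)
    rw [hmem_two ha₀ ha, hmem_two hb₀ hb] at h₂
    tauto
  · intro h
    by_cases ha₁ : a ∈ p₁
    · exact hmul ha₁ ((hmem_two hb₀ hb).mpr (h.mp ha₁))
    · rw [mul_comm]
      exact hmul (not_not.mp (mt h.mpr ha₁)) ((hmem_two ha₀ ha).mpr ha₁)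

end TwoPrimes

theorem divisorGraph_of_two_ass_general (R : Type*) [CommRing R] [Fintype R] (p₁ p₂ : Ideal R)
    (hAss : associatedPrimes R R = {p₁, p₂}) (hint : p₁ ⊓ p₂ = ⊥) :
    IsDivisorGraph (zeroDivisorGraph R) ∧ IsDivisorGraph (compZDGraph R) := by
  have : p₁.IsPrime := (hAss ▸ Set.mem_insert p₁ {p₂} : p₁ ∈ associatedPrimes R R).isPrime
  have : p₂.IsPrime := (hAss ▸ Set.mem_insert_of_mem p₁ rfl : p₂ ∈ associatedPrimes R R).isPrime
  have hmem (v : ZDVertex R) : v.val ∈ p₁ ∨ v.val ∈ p₂ :=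
    let ⟨_, _, hb, hvb⟩ := v.2
    mem_or_mem_of_associatedPrimes_eq_pair hAss hb hvb
  have hzero (u v : ZDVertex R) : u.val * v.val = 0 ↔ (u.val ∈ p₁ ↔ v.val ∉ p₁) :=
    mul_eq_zero_iff_of_inf_eq_bot hint u.2.1 v.2.1 (hmem u) (hmem v)
  constructor
  · refine isDivisorGraph_of_adj_iff_mem_xor _ {v | v.val ∈ p₁} fun u v huv => ?_
    simp only [zeroDivisorGraph, huv, ne_eq, not_false_eq_true, true_and, hzero, Set.mem_ofPred_eq]
  · refine isDivisorGraph_of_adj_iff_mem_iff _ {v | v.val ∈ p₁} fun u v huv => ?_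
    simp only [compZDGraph, huv, ne_eq, not_false_eq_true, true_and, hzero, Set.mem_ofPred_eq]
    tauto

theorem divisorGraph_of_two_ass (R : Type*) [CommRing R] [Fintype R] (p₁ p₂ : Ideal R)
    (hAss : associatedPrimes R R = {p₁, p₂}) (hne : p₁ ≠ p₂) (hint : p₁ ⊓ p₂ = ⊥) :
    IsDivisorGraph (zeroDivisorGraph R) ∧ IsDivisorGraph (compZDGraph R) :=
  divisorGraph_of_two_ass_general R p₁ p₂ hAss hint
end

section
/- Let R be a commutative ring and f(x) a zero-divisor in the polynomial ring R[x]. Then there exists a nonzero constant c ∈ R such that c·f(x) = 0. -/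
theorem mcCoy (R : Type*) [CommRing R] (f : Polynomial R)
    (hf : ∃ g : Polynomial R, g ≠ 0 ∧ f * g = 0) :
    ∃ c : R, c ≠ 0 ∧ Polynomial.C c * f = 0 := by
  obtain ⟨g, hg, hfg⟩ := hf
  have hf_zero_divisor : f ∉ nonZeroDivisors (Polynomial R) := fun hf_regular =>
    hg ((mul_left_mem_nonZeroDivisors_eq_zero_iff hf_regular).1 hfg)
  simpa only [Polynomial.smul_eq_C_mul] using
    Polynomial.notMem_nonZeroDivisors_iff.1 hf_zero_divisor
end
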